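/- arXiv:2208.14418 — 3 statements merged into one kernel-verified Lean document; each statement's English description precedes it below -/
import Mathlib

section
/- With notation as in the augmented Lagrangian Uzawa iteration, the velocity error satisfies ‖u^k − u‖_A ≤ √ε ‖p^k − p‖, where ‖v‖_A = √(A v, v). -/
/-!
Subtracting the saddle point equations from one step of the iteration gives the error equation
`A e + B* (q + ε⁻¹ B e) = 0` for `e = uᵏ - u`, `q = pᵏ⁻¹ - p`. Testing it against `e` yields
`‖e‖_A² + ε⁻¹ ‖B e‖² = -⟪q, B e⟫`, and expanding `ε ‖pᵏ - p‖² = ε ‖q - ε⁻¹ B e‖²` with this identity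
leaves `ε ‖q‖² + 2 ‖e‖_A² + 3 ε⁻¹ ‖B e‖²`, which dominates `‖e‖_A²`.
-/

open scoped RealInnerProductSpace

theorem LinearMap.apply_sub_add_adjoint_eq_zero {R M N : Type*} [CommRing R]
    [AddCommGroup M] [Module R M] [AddCommGroup N] [Module R N]
    {A : M →ₗ[R] M} {B : M →ₗ[R] N} {Bs : N →ₗ[R] M} {c : R} {f u u' : M} {p p' : N}
    (hstep : (A + c • (Bs ∘ₗ B)) u' = f - Bs p') (hsol1 : A u + Bs p = f) (hsol2 : B u = 0) :
    A (u' - u) + Bs (p' - p + c • B (u' - u)) = 0 := by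
  simp only [LinearMap.add_apply, LinearMap.smul_apply, LinearMap.comp_apply] at hstep
  rw [← hsol1] at hstep
  simp only [map_sub, map_add, map_smul, hsol2, sub_zero]
  rw [← sub_eq_zero] at hstep
  rw [← hstep]
  abel

section InnerProduct

variable {V W : Type*} [NormedAddCommGroup V] [InnerProductSpace ℝ V]
  [NormedAddCommGroup W] [InnerProductSpace ℝ W]

theorem inner_apply_add_mul_norm_sq_eq_neg_inner {A : V →ₗ[ℝ] V} {B : V →ₗ[ℝ] W}
    {Bs : W →ₗ[ℝ] V} (hBs : ∀ (q : W) (x : V), ⟪Bs q, x⟫ = ⟪q, B x⟫) {c : ℝ} {e : V} {q : W}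
    (h : A e + Bs (q + c • B e) = 0) :
    ⟪A e, e⟫ + c * ‖B e‖ ^ 2 = -⟪q, B e⟫ := by
  have := congrArg (⟪·, e⟫) h
  simp only [inner_add_left, hBs, real_inner_smul_left, real_inner_self_eq_norm_sq,
    inner_zero_left] at this
  linarith

theorem le_mul_norm_sub_inv_smul_sq {a ε : ℝ} {q b : W} (ha : 0 ≤ a) (hε : 0 < ε)
    (h : a + ε⁻¹ * ‖b‖ ^ 2 = -⟪q, b⟫) :
    a ≤ ε * ‖q - ε⁻¹ • b‖ ^ 2 := by
  have hexpand : ε * ‖q - ε⁻¹ • b‖ ^ 2 = ε * ‖q‖ ^ 2 - 2 * ⟪q, b⟫ + ε⁻¹ * ‖b‖ ^ 2 := by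
    rw [norm_sub_sq_real, real_inner_smul_right, norm_smul, mul_pow, Real.norm_eq_abs, sq_abs]
    field_simp
  rw [hexpand]
  nlinarith [mul_nonneg hε.le (sq_nonneg ‖q‖), mul_nonneg (inv_pos.2 hε).le (sq_nonneg ‖b‖)]

end InnerProduct

theorem uzawa_velocity_error_bound_general
    {V W : Type*}
    [NormedAddCommGroup V] [InnerProductSpace ℝ V]
    [NormedAddCommGroup W] [InnerProductSpace ℝ W]
    (A : V →ₗ[ℝ] V)
    (hA_pos : ∀ x : V, x ≠ 0 → 0 < ⟪A x, x⟫)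
    (B : V →ₗ[ℝ] W)
    (Bs : W →ₗ[ℝ] V) (hBs : ∀ (q : W) (x : V), ⟪Bs q, x⟫ = ⟪q, B x⟫)
    (f : V) (usol : V) (psol : W)
    (hsol1 : A usol + Bs psol = f) (hsol2 : B usol = 0)
    (ε : ℝ) (hε : 0 < ε)
    (u : ℕ → V) (p : ℕ → W)
    (hu : ∀ k : ℕ, (A + ε⁻¹ • (Bs ∘ₗ B)) (u (k + 1)) = f - Bs (p k))
    (hp : ∀ k : ℕ, p (k + 1) = p k - ε⁻¹ • B (u (k + 1))) :
    ∀ k : ℕ,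
      Real.sqrt ⟪A (u (k + 1) - usol), u (k + 1) - usol⟫ ≤
        Real.sqrt ε * ‖p (k + 1) - psol‖ := by
  intro k
  set e := u (k + 1) - usol
  have hA_nonneg : 0 ≤ ⟪A e, e⟫ := by
    rcases eq_or_ne e 0 with he | he
    · simp [he]
    · exact (hA_pos e he).le
  have hpressure : p (k + 1) - psol = (p k - psol) - ε⁻¹ • B e := by
    rw [hp k, map_sub, hsol2, sub_zero]
    abel
  have henergy := inner_apply_add_mul_norm_sq_eq_neg_inner hBs
    (LinearMap.apply_sub_add_adjoint_eq_zero (hu k) hsol1 hsol2)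
  have hbound := le_mul_norm_sub_inv_smul_sq hA_nonneg hε henergy
  rw [← hpressure] at hbound
  calc Real.sqrt ⟪A e, e⟫ ≤ Real.sqrt (ε * ‖p (k + 1) - psol‖ ^ 2) := Real.sqrt_le_sqrt hbound
    _ = Real.sqrt ε * ‖p (k + 1) - psol‖ := by
      rw [Real.sqrt_mul hε.le, Real.sqrt_sq (norm_nonneg _)]

/-- Velocity error of the augmented Lagrangian Uzawa iteration:
`‖uᵏ − u‖_A ≤ √ε ‖pᵏ − p‖`, where `‖v‖_A = √⟪Av, v⟫`. -/
theorem uzawa_velocity_error_bound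
    {V W : Type*}
    [NormedAddCommGroup V] [InnerProductSpace ℝ V] [FiniteDimensional ℝ V]
    [NormedAddCommGroup W] [InnerProductSpace ℝ W] [FiniteDimensional ℝ W]
    (A : V →ₗ[ℝ] V)
    (hA_sym : ∀ x y : V, ⟪A x, y⟫ = ⟪x, A y⟫)
    (hA_pos : ∀ x : V, x ≠ 0 → 0 < ⟪A x, x⟫)
    (B : V →ₗ[ℝ] W) (hB_surj : Function.Surjective B)
    (Bs : W →ₗ[ℝ] V) (hBs : ∀ (q : W) (x : V), ⟪Bs q, x⟫ = ⟪q, B x⟫)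
    (f : V) (usol : V) (psol : W)
    (hsol1 : A usol + Bs psol = f) (hsol2 : B usol = 0)
    (ε : ℝ) (hε : 0 < ε)
    (u : ℕ → V) (p : ℕ → W) (hp0 : p 0 = 0)
    (hu : ∀ k : ℕ, (A + ε⁻¹ • (Bs ∘ₗ B)) (u (k + 1)) = f - Bs (p k))
    (hp : ∀ k : ℕ, p (k + 1) = p k - ε⁻¹ • B (u (k + 1))) :
    ∀ k : ℕ,
      Real.sqrt ⟪A (u (k + 1) - usol), u (k + 1) - usol⟫ ≤
        Real.sqrt ε * ‖p (k + 1) - psol‖ :=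
  uzawa_velocity_error_bound_general A hA_pos B Bs hBs f usol psol hsol1 hsol2 ε hε u p hu hp
end

section
/- Let A be self-adjoint positive definite and B surjective with adjoint B* on finite-dimensional inner product spaces, ε > 0, A^ε = A + ε^{-1}B*B, S = BA^{-1}B*, S^ε = B(A^ε)^{-1}B*. Then for every eigenvalue μ of S, the quantity μ/(ε+μ) is an eigenvalue of ε^{-1}S^ε, and in particular the spectral radius of I − ε^{-1}S^ε equals ε/(ε + μ_0) where μ_0 is the smallest eigenvalue of S. -/
/-!
The resolvent identity `A⁻¹ - (A + ε⁻¹ B*B)⁻¹ = ε⁻¹ A⁻¹ B*B (A + ε⁻¹ B*B)⁻¹`, sandwiched between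
`B` and `B*`, gives `S - Sᵉ = ε⁻¹ S Sᵉ`, and its mirror image gives `S - Sᵉ = ε⁻¹ Sᵉ S`.
Equivalently `I - ε⁻¹ Sᵉ = ε (S + ε)⁻¹`, which is `Sᵉ = (S⁻¹ + ε⁻¹)⁻¹`. Hence the eigenvalues of
`I - ε⁻¹ Sᵉ` are exactly the numbers `ε / (ε + μ)` with `μ` an eigenvalue of `S`; they are
positive, and the largest one comes from the smallest `μ`.
-/

open scoped RealInnerProductSpace

open Module

section Resolvent

variable {R : Type*} [Ring R] {a b b' d : R}

theorem sub_eq_mul_mul_of_mul_eq_one (hb : b * a = 1) (hb' : (a + d) * b' = 1) :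
    b - b' = b * d * b' := by
  calc b - b' = b * ((a + d) * b') - b' := by rw [hb', mul_one]
    _ = b * d * b' := by rw [← mul_assoc, mul_add, hb, add_mul, one_mul, add_sub_cancel_left]

theorem sub_eq_mul_mul_of_mul_eq_one' (hb : a * b = 1) (hb' : b' * (a + d) = 1) :
    b - b' = b' * d * b := by
  calc b - b' = b' * (a + d) * b - b' := by rw [hb', one_mul]
    _ = b' * d * b := by rw [mul_add, add_mul, mul_assoc b' a, hb, mul_one, add_sub_cancel_left]

end Resolvent

section ShiftedInverse

variable {K R : Type*} [Field K] [Ring R] [Algebra K R] {S T : R} {a : K}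

theorem add_smul_one_mul_one_sub_inv_smul (ha : a ≠ 0) (h : S - T = a⁻¹ • (S * T)) :
    (S + a • 1) * (1 - a⁻¹ • T) = a • 1 := by
  rw [add_mul, mul_sub, mul_sub, mul_one, mul_one, mul_smul_comm, ← h, smul_mul_assoc, one_mul,
    smul_smul, mul_inv_cancel₀ ha, one_smul]
  abel

theorem one_sub_inv_smul_mul_add_smul_one (ha : a ≠ 0) (h : S - T = a⁻¹ • (T * S)) :
    (1 - a⁻¹ • T) * (S + a • 1) = a • 1 := by
  rw [sub_mul, mul_add, mul_add, one_mul, one_mul, smul_mul_assoc, ← h, mul_smul_comm, mul_one,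
    smul_smul, mul_inv_cancel₀ ha, one_smul]
  abel

end ShiftedInverse

namespace Module.End

variable {K M : Type*} [Field K] [AddCommGroup M] [Module K M] {P X : End K M} {a ν : K}

theorem HasEigenvalue.div_of_mul_eq_smul_one (h : P * X = a • 1) (hν : X.HasEigenvalue ν)
    (hν0 : ν ≠ 0) : P.HasEigenvalue (a / ν) := by
  obtain ⟨v, hv⟩ := hν.exists_hasEigenvector
  have hPv : ν • P v = a • v := by
    rw [← map_smul, ← hv.apply_eq_smul, ← mul_apply, h]
    rfl
  refine hasEigenvalue_of_hasEigenvector ⟨mem_eigenspace_iff.mpr ?_, hv.2⟩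
  rw [div_eq_inv_mul, mul_smul, ← hPv, smul_smul, inv_mul_cancel₀ hν0, one_smul]

theorem HasEigenvalue.ne_zero_of_mul_eq_smul_one (h : X * P = a • 1) (ha : a ≠ 0)
    (hν : P.HasEigenvalue ν) : ν ≠ 0 := by
  rintro rfl
  obtain ⟨v, hv⟩ := hν.exists_hasEigenvector
  have hav := congr($h v)
  rw [mul_apply, hv.apply_eq_smul, zero_smul, map_zero, LinearMap.smul_apply, one_apply] at hav
  exact hv.2 ((smul_eq_zero.mp hav.symm).resolve_left ha)

end Module.End

theorem schur_complement_eigenvalue_mapping_general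
    {V W : Type*}
    [NormedAddCommGroup V] [InnerProductSpace ℝ V]
    [NormedAddCommGroup W] [InnerProductSpace ℝ W]
    (A : V →ₗ[ℝ] V)
    (B : V →ₗ[ℝ] W)
    (Bs : W →ₗ[ℝ] V)
    (ε : ℝ) (hε : 0 < ε)
    (Ainv : V →ₗ[ℝ] V) (hAinv : ∀ x, A (Ainv x) = x) (hAinv' : ∀ x, Ainv (A x) = x)
    (Aεinv : V →ₗ[ℝ] V)
    (hAεinv : ∀ x, (A + ε⁻¹ • (Bs ∘ₗ B)) (Aεinv x) = x)
    (hAεinv' : ∀ x, Aεinv ((A + ε⁻¹ • (Bs ∘ₗ B)) x) = x)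
    (μ0 : ℝ) (hμ0pos : 0 < μ0)
    (hμ0eig : Module.End.HasEigenvalue (B ∘ₗ Ainv ∘ₗ Bs) μ0)
    (hμ0min : ∀ μ : ℝ, Module.End.HasEigenvalue (B ∘ₗ Ainv ∘ₗ Bs) μ → μ0 ≤ μ) :
    (∀ μ : ℝ, Module.End.HasEigenvalue (B ∘ₗ Ainv ∘ₗ Bs) μ →
      Module.End.HasEigenvalue (ε⁻¹ • (B ∘ₗ Aεinv ∘ₗ Bs)) (μ / (ε + μ))) ∧
    Module.End.HasEigenvalue
      ((LinearMap.id : W →ₗ[ℝ] W) - ε⁻¹ • (B ∘ₗ Aεinv ∘ₗ Bs)) (ε / (ε + μ0)) ∧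
    (∀ lam : ℝ,
      Module.End.HasEigenvalue
        ((LinearMap.id : W →ₗ[ℝ] W) - ε⁻¹ • (B ∘ₗ Aεinv ∘ₗ Bs)) lam →
      |lam| ≤ ε / (ε + μ0)) := by
  set S : End ℝ W := B ∘ₗ Ainv ∘ₗ Bs
  set T : End ℝ W := B ∘ₗ Aεinv ∘ₗ Bs
  have hST : S - T = ε⁻¹ • (S * T) := by
    have h := sub_eq_mul_mul_of_mul_eq_one (LinearMap.ext hAinv')
      (LinearMap.ext hAεinv : (A + ε⁻¹ • (Bs ∘ₗ B)) * Aεinv = 1)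
    ext x
    simpa [S, T] using congr(B ($h (Bs x)))
  have hTS : S - T = ε⁻¹ • (T * S) := by
    have h := sub_eq_mul_mul_of_mul_eq_one' (LinearMap.ext hAinv)
      (LinearMap.ext hAεinv' : Aεinv * (A + ε⁻¹ • (Bs ∘ₗ B)) = 1)
    ext x
    simpa [S, T] using congr(B ($h (Bs x)))
  have hXP := add_smul_one_mul_one_sub_inv_smul hε.ne' hST
  have hPX := one_sub_inv_smul_mul_add_smul_one hε.ne' hTS
  have hPeig {μ : ℝ} (hμ : S.HasEigenvalue μ) : (1 - ε⁻¹ • T).HasEigenvalue (ε / (ε + μ)) :=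
    (End.hasEigenvalue_add_iff.mpr (by rwa [add_sub_cancel_left])).div_of_mul_eq_smul_one hPX
      (by linarith [hμ0min μ hμ])
  refine ⟨fun μ hμ => ?_, hPeig hμ0eig, fun lam hlam => ?_⟩
  · have hμpos : 0 < μ := hμ0pos.trans_le (hμ0min μ hμ)
    have hRμ := End.hasEigenvalue_sub'_iff.mp
      (by rw [one_smul, ← End.one_eq_id]; exact hPeig hμ :
        End.HasEigenvalue ((1 : ℝ) • .id - ε⁻¹ • T) (ε / (ε + μ)))
    convert hRμ using 1
    field_simp
    ring
  · have hlam0 := hlam.ne_zero_of_mul_eq_smul_one hXP hε.ne'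
    have hμ := End.hasEigenvalue_add_iff.mp (hlam.div_of_mul_eq_smul_one hXP hlam0)
    have hle : ε + μ0 ≤ ε / lam := by linarith [hμ0min _ hμ]
    have hlampos : 0 < lam := (div_pos_iff_of_pos_left hε).mp (by linarith)
    rw [abs_of_pos hlampos, le_div_iff₀ (by positivity)]
    rwa [le_div_iff₀ hlampos, mul_comm] at hle

/-- Eigenvalue mapping for the perturbed Schur complement: each eigenvalue `μ` of
`S = B A⁻¹ B*` yields the eigenvalue `μ/(ε+μ)` of `ε⁻¹ Sᵉ`, and the spectral
radius of `I − ε⁻¹ Sᵉ` equals `ε/(ε+μ₀)` with `μ₀` the smallest eigenvalue of `S`. -/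
theorem schur_complement_eigenvalue_mapping
    {V W : Type*}
    [NormedAddCommGroup V] [InnerProductSpace ℝ V] [FiniteDimensional ℝ V]
    [NormedAddCommGroup W] [InnerProductSpace ℝ W] [FiniteDimensional ℝ W]
    (A : V →ₗ[ℝ] V)
    (hA_sym : ∀ x y : V, ⟪A x, y⟫ = ⟪x, A y⟫)
    (hA_pos : ∀ x : V, x ≠ 0 → 0 < ⟪A x, x⟫)
    (B : V →ₗ[ℝ] W) (hB_surj : Function.Surjective B)
    (Bs : W →ₗ[ℝ] V) (hBs : ∀ (q : W) (x : V), ⟪Bs q, x⟫ = ⟪q, B x⟫)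
    (ε : ℝ) (hε : 0 < ε)
    (Ainv : V →ₗ[ℝ] V) (hAinv : ∀ x, A (Ainv x) = x) (hAinv' : ∀ x, Ainv (A x) = x)
    (Aεinv : V →ₗ[ℝ] V)
    (hAεinv : ∀ x, (A + ε⁻¹ • (Bs ∘ₗ B)) (Aεinv x) = x)
    (hAεinv' : ∀ x, Aεinv ((A + ε⁻¹ • (Bs ∘ₗ B)) x) = x)
    (μ0 : ℝ) (hμ0pos : 0 < μ0)
    (hμ0eig : Module.End.HasEigenvalue (B ∘ₗ Ainv ∘ₗ Bs) μ0)
    (hμ0min : ∀ μ : ℝ, Module.End.HasEigenvalue (B ∘ₗ Ainv ∘ₗ Bs) μ → μ0 ≤ μ) :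
    (∀ μ : ℝ, Module.End.HasEigenvalue (B ∘ₗ Ainv ∘ₗ Bs) μ →
      Module.End.HasEigenvalue (ε⁻¹ • (B ∘ₗ Aεinv ∘ₗ Bs)) (μ / (ε + μ))) ∧
    Module.End.HasEigenvalue
      ((LinearMap.id : W →ₗ[ℝ] W) - ε⁻¹ • (B ∘ₗ Aεinv ∘ₗ Bs)) (ε / (ε + μ0)) ∧
    (∀ lam : ℝ,
      Module.End.HasEigenvalue
        ((LinearMap.id : W →ₗ[ℝ] W) - ε⁻¹ • (B ∘ₗ Aεinv ∘ₗ Bs)) lam →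
      |lam| ≤ ε / (ε + μ0)) :=
  schur_complement_eigenvalue_mapping_general A B Bs ε hε Ainv hAinv hAinv' Aεinv hAεinv hAεinv' μ0
    hμ0pos hμ0eig hμ0min
end

section
/- Let A : V → V and the facet mass bilinear form on the skeleton be given, with the HDG-P0 energy identity: if (σ, u, û) solves the three HDG-P0 discrete equations with test functions (r, v, 𝑣̂), then choosing (r, v, 𝑣̂) = (σ, u, −û) yields Σ_K [Q_K^0(α_h^{-1}|σ|²) + Q_{∂K}^0(τ_K (u−û)²) + Q_K^1(β u²)] = Σ_K Q_K^1(f u). In particular if f = 0 and β > 0 pointwise at the quadrature nodes, then σ = 0, u = 0, and û = u on all facets, so the discrete system has a unique solution. -/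
section Aux

variable {S U M D : Type*}
    [AddCommGroup S] [Module ℝ S]
    [AddCommGroup U] [Module ℝ U]
    [AddCommGroup M] [Module ℝ M]
    [AddCommGroup D] [Module ℝ D]
    (mα : S →ₗ[ℝ] S →ₗ[ℝ] ℝ) (mβ : U →ₗ[ℝ] U →ₗ[ℝ] ℝ)
    (t : D →ₗ[ℝ] D →ₗ[ℝ] ℝ) (b : M →ₗ[ℝ] S →ₗ[ℝ] ℝ)
    (J : U →ₗ[ℝ] D) (Jhat : M →ₗ[ℝ] D) (ℓ : U →ₗ[ℝ] ℝ)

lemma hdg_energy (σ : S) (u : U) (uhat : M)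
    (heqA : ∀ r : S, mα σ r + b uhat r = 0)
    (heq1 : ∀ w : U, t (J u - Jhat uhat) (J w) + mβ u w = ℓ w)
    (heqB : ∀ m : M, b m σ + t (J u - Jhat uhat) (Jhat m) = 0) :
    mα σ σ + t (J u - Jhat uhat) (J u - Jhat uhat) + mβ u u = ℓ u := by
  have h1 := heqA σ
  have h2 := heq1 u
  have h3 := heqB uhat
  have hsplit : t (J u - Jhat uhat) (J u - Jhat uhat)
      = t (J u - Jhat uhat) (J u) - t (J u - Jhat uhat) (Jhat uhat) :=
    map_sub _ _ _
  linarith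

lemma hdg_zero
    (hmα_pd : ∀ s : S, s ≠ 0 → 0 < mα s s)
    (ht_pd : ∀ e : D, e ≠ 0 → 0 < t e e)
    (hJhat_inj : Function.Injective Jhat)
    (hmβ_pd : ∀ w : U, w ≠ 0 → 0 < mβ w w)
    (σ : S) (u : U) (uhat : M)
    (heqA : ∀ r : S, mα σ r + b uhat r = 0)
    (heq1 : ∀ w : U, t (J u - Jhat uhat) (J w) + mβ u w = 0)
    (heqB : ∀ m : M, b m σ + t (J u - Jhat uhat) (Jhat m) = 0) :
    σ = 0 ∧ u = 0 ∧ uhat = 0 := by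
  have hE : mα σ σ + t (J u - Jhat uhat) (J u - Jhat uhat) + mβ u u = 0 :=
    hdg_energy mα mβ t b J Jhat 0 σ u uhat heqA (by simpa using heq1) heqB
  have hα : 0 ≤ mα σ σ := by
    rcases eq_or_ne σ 0 with h | h
    · simp [h]
    · exact (hmα_pd σ h).le
  have ht : 0 ≤ t (J u - Jhat uhat) (J u - Jhat uhat) := by
    rcases eq_or_ne (J u - Jhat uhat) 0 with h | h
    · simp [h]
    · exact (ht_pd _ h).le
  have hβ : 0 ≤ mβ u u := by
    rcases eq_or_ne u 0 with h | h
    · simp [h]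
    · exact (hmβ_pd u h).le
  have hσ : σ = 0 := by
    by_contra h; have := hmα_pd σ h; linarith
  have hu : u = 0 := by
    by_contra h; have := hmβ_pd u h; linarith
  have he : J u - Jhat uhat = 0 := by
    by_contra h; have := ht_pd _ h; linarith
  rw [hu, map_zero, zero_sub, neg_eq_zero] at he
  exact ⟨hσ, hu, hJhat_inj (by rw [he, map_zero])⟩

end Aux

/-- Abstract HDG-P0 energy identity and uniqueness: if `(σ, u, uhat)` solves the
three discrete HDG-P0 equations (with SPD flux mass form `mα`, positive definite
stabilization form `t`, nonnegative reaction form `mβ`, coupling form `b`, trace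
maps `J`, `Jhat` and load `ℓ`), then testing with `(σ, u, −uhat)` yields the energy
identity `mα(σ,σ) + t(Ju−Ĵuhat, Ju−Ĵuhat) + mβ(u,u) = ℓ(u)`.  If moreover the load
vanishes and `mβ` is positive definite (`β > 0`), then `σ = 0`, `u = 0` and
`Ĵuhat = Ju` (hence `uhat = 0`), and the discrete system has a unique solution. -/
theorem hdgP0_energy_identity_and_uniqueness
    {S U M D : Type*}
    [AddCommGroup S] [Module ℝ S] [FiniteDimensional ℝ S]
    [AddCommGroup U] [Module ℝ U] [FiniteDimensional ℝ U]
    [AddCommGroup M] [Module ℝ M] [FiniteDimensional ℝ M]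
    [AddCommGroup D] [Module ℝ D] [FiniteDimensional ℝ D]
    (mα : S →ₗ[ℝ] S →ₗ[ℝ] ℝ) (mβ : U →ₗ[ℝ] U →ₗ[ℝ] ℝ)
    (t : D →ₗ[ℝ] D →ₗ[ℝ] ℝ) (b : M →ₗ[ℝ] S →ₗ[ℝ] ℝ)
    (J : U →ₗ[ℝ] D) (Jhat : M →ₗ[ℝ] D) (ℓ : U →ₗ[ℝ] ℝ)
    (hmα_pd : ∀ s : S, s ≠ 0 → 0 < mα s s)
    (ht_pd : ∀ e : D, e ≠ 0 → 0 < t e e)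
    (hmβ_pos : ∀ w : U, 0 ≤ mβ w w)
    (hJhat_inj : Function.Injective Jhat)
    (σ : S) (u : U) (uhat : M)
    (heqA : ∀ r : S, mα σ r + b uhat r = 0)
    (heq1 : ∀ w : U, t (J u - Jhat uhat) (J w) + mβ u w = ℓ w)
    (heqB : ∀ m : M, b m σ + t (J u - Jhat uhat) (Jhat m) = 0) :
    mα σ σ + t (J u - Jhat uhat) (J u - Jhat uhat) + mβ u u = ℓ u ∧
    ((∀ w : U, w ≠ 0 → 0 < mβ w w) → ℓ = 0 →
      σ = 0 ∧ u = 0 ∧ Jhat uhat = J u ∧ uhat = 0) ∧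
    ((∀ w : U, w ≠ 0 → 0 < mβ w w) →
      ∀ (σ' : S) (u' : U) (uhat' : M),
        (∀ r : S, mα σ' r + b uhat' r = 0) →
        (∀ w : U, t (J u' - Jhat uhat') (J w) + mβ u' w = ℓ w) →
        (∀ m : M, b m σ' + t (J u' - Jhat uhat') (Jhat m) = 0) →
        σ' = σ ∧ u' = u ∧ uhat' = uhat) := by
  refine ⟨hdg_energy mα mβ t b J Jhat ℓ σ u uhat heqA heq1 heqB, ?_, ?_⟩
  · intro hpd hℓ
    obtain ⟨hσ, hu, hhat⟩ :=
      hdg_zero mα mβ t b J Jhat hmα_pd ht_pd hJhat_inj hpd σ u uhat heqA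
        (by simpa [hℓ] using heq1) heqB
    exact ⟨hσ, hu, by simp [hhat, hu], hhat⟩
  · intro hpd σ' u' uhat' heqA' heq1' heqB'
    have key : σ' - σ = 0 ∧ u' - u = 0 ∧ uhat' - uhat = 0 := by
      apply hdg_zero mα mβ t b J Jhat hmα_pd ht_pd hJhat_inj hpd
      · intro r
        have h1 := heqA r; have h2 := heqA' r
        simp only [map_sub, LinearMap.sub_apply] at h1 h2 ⊢
        linarith
      · intro w
        have h1 := heq1 w; have h2 := heq1' w
        have hd : J (u' - u) - Jhat (uhat' - uhat)
            = (J u' - Jhat uhat') - (J u - Jhat uhat) := by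
          simp only [map_sub]; abel
        rw [hd]
        simp only [map_sub, LinearMap.sub_apply] at h1 h2 ⊢
        linarith
      · intro m
        have h1 := heqB m; have h2 := heqB' m
        have hd : J (u' - u) - Jhat (uhat' - uhat)
            = (J u' - Jhat uhat') - (J u - Jhat uhat) := by
          simp only [map_sub]; abel
        rw [hd]
        simp only [map_sub, LinearMap.sub_apply] at h1 h2 ⊢
        linarith
    exact ⟨sub_eq_zero.mp key.1, sub_eq_zero.mp key.2.1, sub_eq_zero.mp key.2.2⟩
end
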